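/- Assume ζ_3 ≠ ζ_4 and ζ_3 ≠ ζ_5. Then the left-hand side integrand of the pentagon equation is a single Gaussian exponential: ∫∫∫∫ exp(Φ_{1234} + Φ_{1235}) db^{(1)}_{1234} db^{(2)}_{1234} db^{(1)}_{1235} db^{(2)}_{1235} = f_{1234} · f_{1235} (integration innermost over b^{(1)}_{1234}, then b^{(2)}_{1234}, then b^{(1)}_{1235}, then b^{(2)}_{1235}). -/

import Mathlib

/-!  Context: a Grassmann algebra `Λ` over a field `F` of characteristic ≠ 2, with
anticommuting generators indexed by a type `ι` (for us: the (3-element) subsets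
`S ⊆ Fin 5`, possibly together with extra generators `b`).  Vertex `k ∈ {1,…,5}`
of the paper corresponds to `k - 1 : Fin 5`, so `ζ_{ij} = ζ (i-1) - ζ (j-1)`.
The Berezin integral in a generator is axiomatized by the predicate `IsBerezin`. -/

/-- The subalgebra of elements not involving the generator `e i`, i.e. the
subalgebra generated by all the other generators. -/
def notInvolving (F : Type*) [Field F] {Λ : Type*} [Ring Λ] [Algebra F Λ]
    {ι : Type*} (e : ι → Λ) (i : ι) : Subalgebra F Λ :=
  Algebra.adjoin F { x | ∃ j, j ≠ i ∧ x = e j }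

/-- `B` is the Berezin integral with respect to the generator `e i`: it is `F`-linear
and, writing `x = g + h * e i` with `g`, `h` not involving `e i` (the generator moved
to the rightmost position), one has `B x = h`.  Equivalently: `B g = 0` and
`B (h * e i) = h` for `g`, `h` not involving `e i`. -/
def IsBerezin (F : Type*) [Field F] {Λ : Type*} [Ring Λ] [Algebra F Λ]
    {ι : Type*} (e : ι → Λ) (i : ι) (B : Λ →ₗ[F] Λ) : Prop :=
  (∀ g ∈ notInvolving F e i, B g = 0) ∧
  (∀ h ∈ notInvolving F e i, B (h * e i) = h)

/-- The tetrahedron weight `f_{i₁i₂i₃i₄}` (formula (1) of the paper), where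
`a S` is the Grassmann generator attached to the unoriented 2-face `S`. -/
def fw {F : Type*} [Field F] {Λ : Type*} [Ring Λ] [Algebra F Λ]
    (ζ : Fin 5 → F) (a : Finset (Fin 5) → Λ) (i₁ i₂ i₃ i₄ : Fin 5) : Λ :=
  (ζ i₁ - ζ i₂) • (a {i₁, i₂, i₃} * a {i₁, i₂, i₄})
    - (ζ i₁ - ζ i₃) • (a {i₁, i₂, i₃} * a {i₁, i₃, i₄})
    + (ζ i₁ - ζ i₄) • (a {i₁, i₂, i₄} * a {i₁, i₃, i₄})
    + (ζ i₂ - ζ i₃) • (a {i₁, i₂, i₃} * a {i₂, i₃, i₄})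
    - (ζ i₂ - ζ i₄) • (a {i₁, i₂, i₄} * a {i₂, i₃, i₄})
    + (ζ i₃ - ζ i₄) • (a {i₁, i₃, i₄} * a {i₂, i₃, i₄})

/-- The (terminating) Taylor series of the exponential of a nilpotent element:
`exp x = Σ_{n < N} xⁿ/n!`, where `N` is any bound with `x ^ N = 0`. -/
def expT (F : Type*) [Field F] {Λ : Type*} [Ring Λ] [Algebra F Λ] (N : ℕ) (x : Λ) : Λ :=
  ∑ n ∈ Finset.range N, ((n.factorial : F))⁻¹ • x ^ n

/-- The bilinear form `Φ_{i₁i₂i₃i₄}` (formula (6) of the paper):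
`Φ = b⁽¹⁾(ζ_{i₂i₃} a_{i₁i₂i₃} − ζ_{i₂i₄} a_{i₁i₂i₄} + ζ_{i₃i₄} a_{i₁i₃i₄})
   + b⁽²⁾((ζ_{i₁i₃}/ζ_{i₃i₄}) a_{i₁i₂i₃} − (ζ_{i₁i₄}/ζ_{i₃i₄}) a_{i₁i₂i₄} + a_{i₂i₃i₄})`,
where `e (Sum.inl S) = a_S` and `e (Sum.inr b₁)`, `e (Sum.inr b₂)` are the two
extra generators `b⁽¹⁾`, `b⁽²⁾` attached to the tetrahedron. -/
def PhiT {F : Type*} [Field F] {Λ : Type*} [Ring Λ] [Algebra F Λ] {β : Type*}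
    (ζ : Fin 5 → F) (e : Finset (Fin 5) ⊕ β → Λ) (b₁ b₂ : β) (i₁ i₂ i₃ i₄ : Fin 5) : Λ :=
  e (Sum.inr b₁) *
      ((ζ i₂ - ζ i₃) • e (Sum.inl {i₁, i₂, i₃}) - (ζ i₂ - ζ i₄) • e (Sum.inl {i₁, i₂, i₄})
        + (ζ i₃ - ζ i₄) • e (Sum.inl {i₁, i₃, i₄}))
    + e (Sum.inr b₂) *
      (((ζ i₁ - ζ i₃) / (ζ i₃ - ζ i₄)) • e (Sum.inl {i₁, i₂, i₃})
        - ((ζ i₁ - ζ i₄) / (ζ i₃ - ζ i₄)) • e (Sum.inl {i₁, i₂, i₄})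
        + e (Sum.inl {i₂, i₃, i₄}))

/-!
Write `Φ₁₂₃₄ + Φ₁₂₃₅ = Σₖ bₖ cₖ`, where the `cₖ` are linear forms in the generators `a_S`.
Each `bₖ cₖ` is a product of two odd elements, so these terms are even, commute pairwise and
square to zero; hence the truncated exponential factors as `Πₖ (1 + bₖ cₖ)`. Moving `bₖ` to the
right through the odd `cₖ` and the even later factors, the integral over `bₖ` replaces the factor
`1 + bₖ cₖ` by `-cₖ`. The two integrations of a tetrahedron thus leave `c₁ c₂`, which is its
weight `f`.
-/

open Nat

def AntiCommute {Λ : Type*} [Ring Λ] (a b : Λ) : Prop := a * b = -(b * a)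

namespace AntiCommute

variable {F : Type*} [Field F] {Λ : Type*} [Ring Λ] [Algebra F Λ] {a b c : Λ}

theorem eq (h : AntiCommute a b) : a * b = -(b * a) := h

theorem symm (h : AntiCommute a b) : AntiCommute b a := by
  rw [AntiCommute, h, neg_neg]

theorem zero_right (a : Λ) : AntiCommute a 0 := by simp [AntiCommute]

theorem add_right (hb : AntiCommute a b) (hc : AntiCommute a c) : AntiCommute a (b + c) := by
  rw [AntiCommute, mul_add, add_mul, hb, hc, neg_add]

theorem smul_right (h : AntiCommute a b) (r : F) : AntiCommute a (r • b) := by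
  rw [AntiCommute, mul_smul_comm, smul_mul_assoc, h, smul_neg]

theorem commute_mul_right (hb : AntiCommute a b) (hc : AntiCommute a c) : Commute a (b * c) := by
  rw [Commute, SemiconjBy, ← mul_assoc, hb, neg_mul, mul_assoc, hc, mul_neg, neg_neg, mul_assoc]

theorem commute_one_add_mul (hb : AntiCommute a b) (hc : AntiCommute a c) :
    Commute a (1 + b * c) :=
  (Commute.one_right a).add_right (hb.commute_mul_right hc)

theorem mul_mul_self_eq_zero (h : AntiCommute a b) (ha : a * a = 0) : a * b * (a * b) = 0 := by
  rw [mul_assoc, ← mul_assoc b, h.symm, neg_mul, mul_neg, ← mul_assoc, ← mul_assoc, ha,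
    zero_mul, zero_mul, neg_zero]

end AntiCommute

section Grassmann

variable {F : Type*} [Field F] {Λ : Type*} [Ring Λ] [Algebra F Λ] {ι : Type*} {e : ι → Λ}

theorem AntiCommute.of_mem_span (hanti : ∀ i j, AntiCommute (e i) (e j)) {x y : Λ}
    (hx : x ∈ Submodule.span F (Set.range e)) (hy : y ∈ Submodule.span F (Set.range e)) :
    AntiCommute x y := by
  induction hx, hy using Submodule.span_induction₂ with
  | mem_mem x y hx hy => obtain ⟨i, rfl⟩ := hx; obtain ⟨j, rfl⟩ := hy; exact hanti i j
  | zero_left y _ => exact (AntiCommute.zero_right y).symm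
  | zero_right x _ => exact AntiCommute.zero_right x
  | add_left _ _ _ _ _ _ h₁ h₂ => exact (h₁.symm.add_right h₂.symm).symm
  | add_right _ _ _ _ _ _ h₁ h₂ => exact h₁.add_right h₂
  | smul_left r _ _ _ _ h => exact (h.symm.smul_right r).symm
  | smul_right r _ _ _ _ h => exact h.smul_right r

theorem AntiCommute.generator_of_mem_span_image (hanti : ∀ i j, AntiCommute (e i) (e j)) (k : ι)
    {s : Set ι} {c : Λ} (hc : c ∈ Submodule.span F (e '' s)) : AntiCommute (e k) c :=
  .of_mem_span hanti (Submodule.subset_span ⟨k, rfl⟩)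
    (Submodule.span_mono (Set.image_subset_range e s) hc)

theorem commute_mul_mul_of_mem_span (hanti : ∀ i j, AntiCommute (e i) (e j)) {x y z w : Λ}
    (hx : x ∈ Submodule.span F (Set.range e)) (hy : y ∈ Submodule.span F (Set.range e))
    (hz : z ∈ Submodule.span F (Set.range e)) (hw : w ∈ Submodule.span F (Set.range e)) :
    Commute (x * y) (z * w) :=
  .mul_left (AntiCommute.commute_mul_right (.of_mem_span hanti hx hz) (.of_mem_span hanti hx hw))
    (AntiCommute.commute_mul_right (.of_mem_span hanti hy hz) (.of_mem_span hanti hy hw))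

theorem generator_mem_notInvolving {i j : ι} (h : j ≠ i) : e j ∈ notInvolving F e i :=
  Algebra.subset_adjoin ⟨j, h, rfl⟩

theorem span_image_le_notInvolving {s : Set ι} {i : ι} (hi : i ∉ s) :
    Submodule.span F (e '' s) ≤ Subalgebra.toSubmodule (notInvolving F e i) :=
  (Submodule.span_mono (by rintro _ ⟨j, hj, rfl⟩; exact ⟨j, ne_of_mem_of_not_mem hj hi, rfl⟩)).trans
    (Algebra.span_le_adjoin F _)

theorem one_add_mul_mem_notInvolving {i j : ι} {c : Λ} (hji : j ≠ i) (hc : c ∈ notInvolving F e i) :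
    1 + e j * c ∈ notInvolving F e i :=
  add_mem (one_mem _) (mul_mem (generator_mem_notInvolving hji) hc)

end Grassmann

section TruncatedExp

variable {F : Type*} [Field F] {Λ : Type*} [Ring Λ] [Algebra F Λ]

theorem Commute.add_pow_succ_of_mul_self_eq_zero {t y : Λ} (h : Commute t y) (ht : t * t = 0)
    (n : ℕ) :
    (t + y) ^ (n + 1) = y ^ (n + 1) + (n + 1) • (t * y ^ n) := by
  induction n with
  | zero => simp [add_comm]
  | succ n ih =>
    have hty : t * y ^ n * t = 0 := by
      rw [mul_assoc, ← (h.pow_right n).eq, ← mul_assoc, ht, zero_mul]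
    rw [pow_succ, ih]
    simp only [add_mul, mul_add, smul_mul_assoc]
    rw [hty, ← (h.pow_right (n + 1)).eq, mul_assoc t, ← pow_succ, ← pow_succ, smul_zero, add_zero]
    module

theorem list_sum_pow_length_succ_eq_zero {l : List Λ} (hc : l.Pairwise Commute)
    (hsq : ∀ t ∈ l, t * t = 0) :
    l.sum ^ (l.length + 1) = 0 := by
  induction l with
  | nil => simp
  | cons t l ih =>
    rw [List.pairwise_cons] at hc
    rw [List.sum_cons, List.length_cons,
      (Commute.list_sum_right _ _ hc.1).add_pow_succ_of_mul_self_eq_zero (hsq t (by simp)),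
      pow_succ, ih hc.2 (fun u hu => hsq u (by simp [hu])), zero_mul, mul_zero, smul_zero, add_zero]

theorem expT_succ_add {t y : Λ} {N : ℕ} (h : Commute t y) (ht : t * t = 0) (hy : y ^ N = 0)
    (hfac : ∀ n ≤ N, (n ! : F) ≠ 0) :
    expT F (N + 1) (t + y) = (1 + t) * expT F N y := by
  have hterm : ∀ n ∈ Finset.range N, ((n + 1)! : F)⁻¹ • (t + y) ^ (n + 1)
      = ((n + 1)! : F)⁻¹ • y ^ (n + 1) + t * ((n ! : F)⁻¹ • y ^ n) := by
    intro n hn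
    have hn1 : ((n + 1 : ℕ) : F) ≠ 0 := by
      have := hfac (n + 1) (Finset.mem_range.mp hn)
      rw [Nat.factorial_succ, Nat.cast_mul] at this
      exact left_ne_zero_of_mul this
    have hcoef : ((n + 1)! : F)⁻¹ * (n + 1 : ℕ) = (n ! : F)⁻¹ := by
      rw [Nat.factorial_succ, Nat.cast_mul, mul_inv, mul_comm, ← mul_assoc, mul_inv_cancel₀ hn1,
        one_mul]
    rw [h.add_pow_succ_of_mul_self_eq_zero ht, ← Nat.cast_smul_eq_nsmul F, smul_add, smul_smul,
      hcoef, mul_smul_comm]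
  have hlast : expT F (N + 1) y = expT F N y := by
    rw [expT, Finset.sum_range_succ, hy, smul_zero, add_zero, expT]
  calc expT F (N + 1) (t + y)
      = ∑ n ∈ Finset.range N, ((n + 1)! : F)⁻¹ • (t + y) ^ (n + 1) + 1 := by
        simp [expT, Finset.sum_range_succ']
    _ = (∑ n ∈ Finset.range N, ((n + 1)! : F)⁻¹ • y ^ (n + 1) + 1) + t * expT F N y := by
        rw [Finset.sum_congr rfl hterm, Finset.sum_add_distrib, expT, Finset.mul_sum]; abel
    _ = (1 + t) * expT F N y := by
        rw [add_mul, one_mul, ← hlast]; simp [expT, Finset.sum_range_succ']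

theorem expT_list_sum {l : List Λ} (hc : l.Pairwise Commute) (hsq : ∀ t ∈ l, t * t = 0)
    (hfac : ∀ n ≤ l.length, (n ! : F) ≠ 0) :
    expT F (l.length + 1) l.sum = (l.map (1 + ·)).prod := by
  induction l with
  | nil => simp [expT]
  | cons t l ih =>
    rw [List.pairwise_cons] at hc
    have hsq' : ∀ u ∈ l, u * u = 0 := fun u hu => hsq u (by simp [hu])
    rw [List.sum_cons, List.length_cons, List.map_cons, List.prod_cons,
      expT_succ_add (Commute.list_sum_right _ _ hc.1) (hsq t (by simp))
        (list_sum_pow_length_succ_eq_zero hc.2 hsq') hfac,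
      ih hc.2 hsq' (fun n hn => hfac n (by simp; omega))]

end TruncatedExp

section Berezin

variable {F : Type*} [Field F] {Λ : Type*} [Ring Λ] [Algebra F Λ] {ι : Type*} {e : ι → Λ}

theorem IsBerezin.map_mul_one_add_mul_mul {i : ι} {B : Λ →ₗ[F] Λ} (hB : IsBerezin F e i B)
    {g c R : Λ} (hg : g ∈ notInvolving F e i) (hc : c ∈ notInvolving F e i)
    (hR : R ∈ notInvolving F e i) (hec : AntiCommute (e i) c) (heR : Commute (e i) R) :
    B (g * (1 + e i * c) * R) = -(g * c * R) := by
  have hmove : e i * c * R = -(c * R * e i) := by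
    rw [hec.eq, neg_mul, mul_assoc, heR.eq, ← mul_assoc]
  have hsplit : g * (1 + e i * c) * R = g * R + -(g * c * R) * e i := by
    rw [mul_add, mul_one, add_mul, mul_assoc g (e i * c), hmove]
    noncomm_ring
  rw [hsplit, map_add, hB.1 _ (mul_mem hg hR), hB.2 _ (neg_mem (mul_mem (mul_mem hg hc) hR)),
    zero_add]

theorem IsBerezin.map_map_mul_gaussian_mul {i j : ι} {B₁ B₂ : Λ →ₗ[F] Λ}
    (hB₁ : IsBerezin F e i B₁) (hB₂ : IsBerezin F e j B₂)
    (hanti : ∀ k l, AntiCommute (e k) (e l)) (hij : i ≠ j) {s : Set ι} (hi : i ∉ s) (hj : j ∉ s)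
    {c₁ c₂ g R : Λ} (hc₁ : c₁ ∈ Submodule.span F (e '' s)) (hc₂ : c₂ ∈ Submodule.span F (e '' s))
    (hgi : g ∈ notInvolving F e i) (hgj : g ∈ notInvolving F e j)
    (hRi : R ∈ notInvolving F e i) (hRj : R ∈ notInvolving F e j)
    (heRi : Commute (e i) R) (heRj : Commute (e j) R) :
    B₂ (B₁ (g * ((1 + e i * c₁) * (1 + e j * c₂)) * R)) = g * (c₁ * c₂) * R := by
  have hN {k : ι} (hk : k ∉ s) {c : Λ} (hc : c ∈ Submodule.span F (e '' s)) :
      c ∈ notInvolving F e k :=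
    span_image_le_notInvolving hk hc
  have hA (k : ι) {c : Λ} (hc : c ∈ Submodule.span F (e '' s)) : AntiCommute (e k) c :=
    .generator_of_mem_span_image hanti k hc
  have hstep₁ :
      B₁ (g * (1 + e i * c₁) * ((1 + e j * c₂) * R)) = -(g * c₁) * (1 + e j * c₂) * R := by
    rw [hB₁.map_mul_one_add_mul_mul hgi (hN hi hc₁)
      (mul_mem (one_add_mul_mem_notInvolving hij.symm (hN hi hc₂)) hRi) (hA i hc₁)
      (((hanti i j).commute_one_add_mul (hA i hc₂)).mul_right heRi)]
    noncomm_ring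
  rw [← mul_assoc, mul_assoc _ (1 + e j * c₂), hstep₁,
    hB₂.map_mul_one_add_mul_mul (neg_mem (mul_mem hgj (hN hj hc₁))) (hN hj hc₂) hRj (hA j hc₂)
      heRj]
  noncomm_ring

end Berezin

theorem expT_five_gaussian {F : Type*} [Field F] {Λ : Type*} [Ring Λ] [Algebra F Λ] {ι : Type*}
    {e : ι → Λ} (hanti : ∀ k l, AntiCommute (e k) (e l)) (hsq : ∀ k, e k * e k = 0)
    (hfac : ∀ n < 5, (n ! : F) ≠ 0) {i₁ i₂ i₃ i₄ : ι} {c₁ c₂ c₃ c₄ : Λ}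
    (hc₁ : c₁ ∈ Submodule.span F (Set.range e)) (hc₂ : c₂ ∈ Submodule.span F (Set.range e))
    (hc₃ : c₃ ∈ Submodule.span F (Set.range e)) (hc₄ : c₄ ∈ Submodule.span F (Set.range e)) :
    expT F 5 ((e i₁ * c₁ + e i₂ * c₂) + (e i₃ * c₃ + e i₄ * c₄)) =
      1 * ((1 + e i₁ * c₁) * (1 + e i₂ * c₂)) * ((1 + e i₃ * c₃) * (1 + e i₄ * c₄)) := by
  have hgen (k : ι) : e k ∈ Submodule.span F (Set.range e) := Submodule.subset_span ⟨k, rfl⟩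
  have hlist := expT_list_sum (F := F) (l := [e i₁ * c₁, e i₂ * c₂, e i₃ * c₃, e i₄ * c₄])
    (List.pairwise_of_forall_mem_list fun t ht u hu => by
      simp only [List.mem_cons, List.not_mem_nil, or_false] at ht hu
      rcases ht with rfl | rfl | rfl | rfl <;> rcases hu with rfl | rfl | rfl | rfl <;>
        exact commute_mul_mul_of_mem_span hanti (hgen _) ‹_› (hgen _) ‹_›)
    (fun t ht => by
      simp only [List.mem_cons, List.not_mem_nil, or_false] at ht
      rcases ht with rfl | rfl | rfl | rfl <;>
        exact (AntiCommute.of_mem_span hanti (hgen _) ‹_›).mul_mul_self_eq_zero (hsq _))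
    (fun n hn => hfac n (by simp at hn; omega))
  simpa [add_assoc, mul_assoc] using hlist

theorem berezin_expT_five_gaussian {F : Type*} [Field F] {Λ : Type*} [Ring Λ] [Algebra F Λ]
    {ι : Type*} {e : ι → Λ} (hanti : ∀ k l, AntiCommute (e k) (e l)) (hsq : ∀ k, e k * e k = 0)
    (hfac : ∀ n < 5, (n ! : F) ≠ 0) {i₁ i₂ i₃ i₄ : ι} (hnd : [i₁, i₂, i₃, i₄].Nodup)
    {s : Set ι} (hs : Disjoint s {i₁, i₂, i₃, i₄}) {c₁ c₂ c₃ c₄ : Λ}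
    (hc₁ : c₁ ∈ Submodule.span F (e '' s)) (hc₂ : c₂ ∈ Submodule.span F (e '' s))
    (hc₃ : c₃ ∈ Submodule.span F (e '' s)) (hc₄ : c₄ ∈ Submodule.span F (e '' s))
    {B₁ B₂ B₃ B₄ : Λ →ₗ[F] Λ} (hB₁ : IsBerezin F e i₁ B₁) (hB₂ : IsBerezin F e i₂ B₂)
    (hB₃ : IsBerezin F e i₃ B₃) (hB₄ : IsBerezin F e i₄ B₄) :
    B₄ (B₃ (B₂ (B₁ (expT F 5 ((e i₁ * c₁ + e i₂ * c₂) + (e i₃ * c₃ + e i₄ * c₄)))))) =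
      c₁ * c₂ * (c₃ * c₄) := by
  simp only [List.nodup_cons, List.mem_cons, List.not_mem_nil, or_false, not_or,
    List.nodup_nil] at hnd
  obtain ⟨⟨h₁₂, h₁₃, h₁₄⟩, ⟨h₂₃, h₂₄⟩, h₃₄, -⟩ := hnd
  have hout {k : ι} (hk : k ∈ ({i₁, i₂, i₃, i₄} : Set ι)) : k ∉ s := Set.disjoint_right.mp hs hk
  have hN {k : ι} (hk : k ∈ ({i₁, i₂, i₃, i₄} : Set ι)) {c : Λ}
      (hc : c ∈ Submodule.span F (e '' s)) : c ∈ notInvolving F e k :=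
    span_image_le_notInvolving (hout hk) hc
  have hA (k : ι) {c : Λ} (hc : c ∈ Submodule.span F (e '' s)) : AntiCommute (e k) c :=
    .generator_of_mem_span_image hanti k hc
  have hodd {c : Λ} (hc : c ∈ Submodule.span F (e '' s)) : c ∈ Submodule.span F (Set.range e) :=
    Submodule.span_mono (Set.image_subset_range e s) hc
  have hfactor {k j : ι} (hk : k ∈ ({i₁, i₂, i₃, i₄} : Set ι)) (hjk : j ≠ k) {c : Λ}
      (hc : c ∈ Submodule.span F (e '' s)) :
      1 + e j * c ∈ notInvolving F e k ∧ Commute (e k) (1 + e j * c) :=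
    ⟨one_add_mul_mem_notInvolving hjk (hN hk hc), (hanti k j).commute_one_add_mul (hA k hc)⟩
  have hR₁ := hfactor (k := i₁) (by simp) (Ne.symm h₁₃) hc₃
  have hR₂ := hfactor (k := i₂) (by simp) (Ne.symm h₂₃) hc₃
  have hS₁ := hfactor (k := i₁) (by simp) (Ne.symm h₁₄) hc₄
  have hS₂ := hfactor (k := i₂) (by simp) (Ne.symm h₂₄) hc₄
  calc B₄ (B₃ (B₂ (B₁ (expT F 5 ((e i₁ * c₁ + e i₂ * c₂) + (e i₃ * c₃ + e i₄ * c₄))))))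
      = B₄ (B₃ (c₁ * c₂ * ((1 + e i₃ * c₃) * (1 + e i₄ * c₄)) * 1)) := by
        rw [expT_five_gaussian hanti hsq hfac (hodd hc₁) (hodd hc₂) (hodd hc₃) (hodd hc₄),
          hB₁.map_map_mul_gaussian_mul hB₂ hanti h₁₂ (hout (by simp)) (hout (by simp)) hc₁ hc₂
            (one_mem _) (one_mem _) (mul_mem hR₁.1 hS₁.1) (mul_mem hR₂.1 hS₂.1)
            (hR₁.2.mul_right hS₁.2) (hR₂.2.mul_right hS₂.2),
          one_mul, mul_one]
    _ = c₁ * c₂ * (c₃ * c₄) * 1 :=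
        hB₃.map_map_mul_gaussian_mul hB₄ hanti h₃₄ (hout (by simp)) (hout (by simp)) hc₃ hc₄
          (mul_mem (hN (by simp) hc₁) (hN (by simp) hc₂))
          (mul_mem (hN (by simp) hc₁) (hN (by simp) hc₂)) (one_mem _) (one_mem _)
          (.one_right _) (.one_right _)
    _ = c₁ * c₂ * (c₃ * c₄) := mul_one _

section PhiCoeff

variable {F : Type*} [Field F] {Λ : Type*} [Ring Λ] [Algebra F Λ]

def phiCoeff₁ (ζ : Fin 5 → F) (a : Finset (Fin 5) → Λ) (i₁ i₂ i₃ i₄ : Fin 5) : Λ :=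
  (ζ i₂ - ζ i₃) • a {i₁, i₂, i₃} - (ζ i₂ - ζ i₄) • a {i₁, i₂, i₄} + (ζ i₃ - ζ i₄) • a {i₁, i₃, i₄}

def phiCoeff₂ (ζ : Fin 5 → F) (a : Finset (Fin 5) → Λ) (i₁ i₂ i₃ i₄ : Fin 5) : Λ :=
  ((ζ i₁ - ζ i₃) / (ζ i₃ - ζ i₄)) • a {i₁, i₂, i₃}
    - ((ζ i₁ - ζ i₄) / (ζ i₃ - ζ i₄)) • a {i₁, i₂, i₄} + a {i₂, i₃, i₄}

theorem PhiT_eq {β : Type*} (ζ : Fin 5 → F) (e : Finset (Fin 5) ⊕ β → Λ) (b₁ b₂ : β)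
    (i₁ i₂ i₃ i₄ : Fin 5) :
    PhiT ζ e b₁ b₂ i₁ i₂ i₃ i₄ = e (.inr b₁) * phiCoeff₁ ζ (fun S => e (.inl S)) i₁ i₂ i₃ i₄
      + e (.inr b₂) * phiCoeff₂ ζ (fun S => e (.inl S)) i₁ i₂ i₃ i₄ :=
  rfl

theorem phiCoeff₁_mem_span (ζ : Fin 5 → F) (a : Finset (Fin 5) → Λ) (i₁ i₂ i₃ i₄ : Fin 5) :
    phiCoeff₁ ζ a i₁ i₂ i₃ i₄ ∈ Submodule.span F (Set.range a) := by
  have h (S) : a S ∈ Submodule.span F (Set.range a) := Submodule.subset_span ⟨S, rfl⟩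
  exact add_mem (sub_mem (Submodule.smul_mem _ _ (h _)) (Submodule.smul_mem _ _ (h _)))
    (Submodule.smul_mem _ _ (h _))

theorem phiCoeff₂_mem_span (ζ : Fin 5 → F) (a : Finset (Fin 5) → Λ) (i₁ i₂ i₃ i₄ : Fin 5) :
    phiCoeff₂ ζ a i₁ i₂ i₃ i₄ ∈ Submodule.span F (Set.range a) := by
  have h (S) : a S ∈ Submodule.span F (Set.range a) := Submodule.subset_span ⟨S, rfl⟩
  exact add_mem (sub_mem (Submodule.smul_mem _ _ (h _)) (Submodule.smul_mem _ _ (h _))) (h _)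

theorem phiCoeff₁_mul_phiCoeff₂ {ζ : Fin 5 → F} {a : Finset (Fin 5) → Λ}
    (hanti : ∀ S T, AntiCommute (a S) (a T)) (hsq : ∀ S, a S * a S = 0) {i₁ i₂ i₃ i₄ : Fin 5}
    (h₃₄ : ζ i₃ ≠ ζ i₄) :
    phiCoeff₁ ζ a i₁ i₂ i₃ i₄ * phiCoeff₂ ζ a i₁ i₂ i₃ i₄ = fw ζ a i₁ i₂ i₃ i₄ := by
  have h₃₄' : ζ i₃ - ζ i₄ ≠ 0 := sub_ne_zero.mpr h₃₄
  simp only [phiCoeff₁, phiCoeff₂, fw, add_mul, mul_add, sub_mul, mul_sub, smul_mul_assoc,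
    mul_smul_comm, (hanti {i₁, i₂, i₄} {i₁, i₂, i₃}).eq,
    (hanti {i₁, i₃, i₄} {i₁, i₂, i₃}).eq, (hanti {i₁, i₃, i₄} {i₁, i₂, i₄}).eq,
    hsq, smul_zero, smul_neg]
  match_scalars <;> field_simp
  ring

end PhiCoeff

/-- `e (Sum.inr (t, k))` is the generator `b⁽ᵏ⁺¹⁾` of tetrahedron `1234` (for `t = 0`) resp.
`1235` (for `t = 1`). Since `(Φ₁₂₃₄ + Φ₁₂₃₅) ^ 5 = 0`, `expT F 5` is the whole exponential. -/
theorem gaussian_lhs_general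
    {F : Type*} [Field F] {Λ : Type*} [Ring Λ] [Algebra F Λ]
    (ζ : Fin 5 → F)
    (hfac : ∀ n < 5, (n.factorial : F) ≠ 0)
    (h34 : ζ 2 ≠ ζ 3) (h35 : ζ 2 ≠ ζ 4)
    (e : Finset (Fin 5) ⊕ (Fin 2 × Fin 2) → Λ)
    (hanti : ∀ i j, e i * e j = -(e j * e i))
    (hsq : ∀ i, e i * e i = 0)
    (B00 B01 B10 B11 : Λ →ₗ[F] Λ)
    (hB00 : IsBerezin F e (Sum.inr (0, 0)) B00)
    (hB01 : IsBerezin F e (Sum.inr (0, 1)) B01)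
    (hB10 : IsBerezin F e (Sum.inr (1, 0)) B10)
    (hB11 : IsBerezin F e (Sum.inr (1, 1)) B11) :
    B11 (B10 (B01 (B00 (expT F 5
        (PhiT ζ e (0, 0) (0, 1) 0 1 2 3 + PhiT ζ e (1, 0) (1, 1) 0 1 2 4))))) =
      fw ζ (fun S => e (Sum.inl S)) 0 1 2 3 * fw ζ (fun S => e (Sum.inl S)) 0 1 2 4 := by
  have hspan {x : Λ} (hx : x ∈ Submodule.span F (Set.range fun S => e (Sum.inl S))) :
      x ∈ Submodule.span F (e '' Set.range Sum.inl) := by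
    rwa [← Set.range_comp]
  have hdisj : Disjoint (Set.range Sum.inl)
      ({.inr (0, 0), .inr (0, 1), .inr (1, 0), .inr (1, 1)} :
        Set (Finset (Fin 5) ⊕ (Fin 2 × Fin 2))) :=
    Set.disjoint_left.mpr (by rintro _ ⟨S, rfl⟩; simp)
  rw [PhiT_eq, PhiT_eq,
    ← phiCoeff₁_mul_phiCoeff₂ (fun S T => hanti _ _) (fun S => hsq _) h34,
    ← phiCoeff₁_mul_phiCoeff₂ (fun S T => hanti _ _) (fun S => hsq _) h35]
  refine berezin_expT_five_gaussian hanti hsq hfac (by decide) hdisj ?_ ?_ ?_ ?_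
    hB00 hB01 hB10 hB11 <;> apply hspan
  exacts [phiCoeff₁_mem_span _ _ _ _ _ _, phiCoeff₂_mem_span _ _ _ _ _ _,
    phiCoeff₁_mem_span _ _ _ _ _ _, phiCoeff₂_mem_span _ _ _ _ _ _]

/-- The left-hand-side integrand of the pentagon equation as a single Gaussian
exponential: `∫∫∫∫ exp(Φ₁₂₃₄ + Φ₁₂₃₅) db⁽¹⁾₁₂₃₄ db⁽²⁾₁₂₃₄ db⁽¹⁾₁₂₃₅ db⁽²⁾₁₂₃₅
= f₁₂₃₄ · f₁₂₃₅` (innermost integration first).  Here `e (Sum.inr (t, k))` is the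
generator `b⁽ᵏ⁺¹⁾` of tetrahedron `1234` (for `t = 0`) resp. `1235` (for `t = 1`).
The exponential terminates: `(Φ₁₂₃₄ + Φ₁₂₃₅) ^ 5 = 0`; for its Taylor series the
factorials `n!`, `n < 5`, must be invertible in `F`. -/
theorem gaussian_lhs
    {F : Type*} [Field F] {Λ : Type*} [Ring Λ] [Algebra F Λ]
    (hchar : (2 : F) ≠ 0)
    (ζ : Fin 5 → F)
    (hfac : ∀ n < 5, (n.factorial : F) ≠ 0)
    (h34 : ζ 2 ≠ ζ 3) (h35 : ζ 2 ≠ ζ 4)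
    (e : Finset (Fin 5) ⊕ (Fin 2 × Fin 2) → Λ)
    (hanti : ∀ i j, e i * e j = -(e j * e i))
    (hsq : ∀ i, e i * e i = 0)
    (B00 B01 B10 B11 : Λ →ₗ[F] Λ)
    (hB00 : IsBerezin F e (Sum.inr (0, 0)) B00)
    (hB01 : IsBerezin F e (Sum.inr (0, 1)) B01)
    (hB10 : IsBerezin F e (Sum.inr (1, 0)) B10)
    (hB11 : IsBerezin F e (Sum.inr (1, 1)) B11) :
    B11 (B10 (B01 (B00 (expT F 5
        (PhiT ζ e (0, 0) (0, 1) 0 1 2 3 + PhiT ζ e (1, 0) (1, 1) 0 1 2 4))))) =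
      fw ζ (fun S => e (Sum.inl S)) 0 1 2 3 * fw ζ (fun S => e (Sum.inl S)) 0 1 2 4 :=
  gaussian_lhs_general ζ hfac h34 h35 e hanti hsq B00 B01 B10 B11 hB00 hB01 hB10 hB11
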